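/- Let p be an odd prime and d ≥ 1, and let A_5 ⊆ {1,...,p-1} be any subset with |A_5| = (p-1)/2 such that x ∈ A_5 implies p - x ∉ A_5. Then d_{A_5}((Z/pZ)^d) = 2d+1. -/

import Mathlib

/-- A sequence `g` admits a nonempty subsequence with a zero linear combination
with coefficients drawn from `A` (with repetition allowed). -/
def hasZeroComb {G : Type*} [AddCommGroup G] (A : Finset ℕ) {k : ℕ} (g : Fin k → G) : Prop :=
  ∃ s : Finset (Fin k), s.Nonempty ∧ ∃ a : Fin k → ℕ,
    (∀ i ∈ s, a i ∈ A) ∧ ∑ i ∈ s, a i • g i = 0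

/-!
Upper bound: in the group algebra `𝔽_p[G]`, `G = 𝔽_p^d`, the ideal `J` generated by the
`X^{e_l} - 1` satisfies `J^{d(p-1)+1} = 0`. Solving a Vandermonde system gives weights `γ` with
`γ 0 = 1` such that `Y^{|A|}` divides `f(Y) = ∑_{a ∈ {0} ∪ A} γ a (1 + Y)^a`. Then
`w_i = f(X^{g_i} - 1) = ∑ γ a X^{a g_i}` lies in `J^{|A|}`, so `∏ w_i ∈ J^{|A|(2d+1)} = 0` because
`|A|(2d+1) > d(p-1)`. Without an `A`-weighted zero-sum subsequence only the choice `a = 0` in every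
factor contributes to the coefficient of `X^0` in `∏ w_i`, which would then be `γ 0 ^ (2d+1) = 1`.

Lower bound: in `e_1, e_1, …, e_d, e_d` a vanishing coordinate of a weighted subsum would need
`a ≡ 0` or `a + b ≡ 0 (mod p)` with `a, b ∈ A`, which `A ∩ (p - A) = ∅` excludes.
-/

open Finset Polynomial

theorem Finset.sum_pow_card_mul_add_one_eq_zero {ι S : Type*} [CommSemiring S] (s : Finset ι)
    (f : ι → S) {r : ℕ} (h : ∀ i ∈ s, f i ^ (r + 1) = 0) :
    (∑ i ∈ s, f i) ^ (#s * r + 1) = 0 := by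
  induction s using Finset.cons_induction with
  | empty => simp
  | cons a s ha ih =>
    rw [sum_cons, card_cons]
    exact (Commute.all _ _).add_pow_eq_zero_of_add_le_succ_of_pow_eq_zero
      (h a (mem_cons_self a s)) (ih fun i hi => h i (mem_cons_of_mem hi)) (by rw [add_mul]; omega)

theorem Polynomial.aeval_mem_pow_of_X_pow_dvd {R A : Type*} [CommRing R] [CommRing A]
    [Algebra R A] {I : Ideal A} {x : A} (hx : x ∈ I) {f : R[X]} {m : ℕ} (hf : X ^ m ∣ f) :
    aeval x f ∈ I ^ m := by
  obtain ⟨q, rfl⟩ := hf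
  rw [map_mul, map_pow, aeval_X]
  exact Ideal.mul_mem_right _ _ (Ideal.pow_mem_pow hx m)

section GroupAlgebra

variable (R ι : Type*) [CommRing R] [Fintype ι] [DecidableEq ι] (p : ℕ)

noncomputable def augIdeal : Ideal (AddMonoidAlgebra R (ι → ZMod p)) :=
  ∑ l, Ideal.span {AddMonoidAlgebra.single (Pi.single l 1) 1 - 1}

variable {R ι p} [Fact p.Prime]

theorem single_sub_one_mem_augIdeal (h : ι → ZMod p) :
    AddMonoidAlgebra.single h (1 : R) - 1 ∈ augIdeal R ι p := by
  have hgen : ∀ l, Ideal.Quotient.mk (augIdeal R ι p)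
      (AddMonoidAlgebra.single (Pi.single l 1) 1) = 1 := fun l =>
    (Ideal.Quotient.mk_eq_one_iff_sub_mem _).2 <| single_le_sum (f := fun l => Ideal.span _)
      (fun _ _ => bot_le) (mem_univ l) (Ideal.mem_span_singleton_self _)
  have hdecomp : AddMonoidAlgebra.single h (1 : R) =
      ∏ l, AddMonoidAlgebra.single (Pi.single l 1) 1 ^ (h l).val := by
    simp only [AddMonoidAlgebra.single_pow, one_pow, AddMonoidAlgebra.prod_single, prod_const_one]
    congr
    conv_lhs => rw [← univ_sum_single h]
    refine sum_congr rfl fun l _ => ?_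
    rw [← Pi.single_smul, nsmul_eq_mul, mul_one, ZMod.natCast_zmod_val]
  rw [← Ideal.Quotient.mk_eq_one_iff_sub_mem, hdecomp, map_prod]
  simp only [map_pow, hgen, one_pow, prod_const_one]

theorem augIdeal_pow_eq_bot [CharP R p] :
    augIdeal R ι p ^ (Fintype.card ι * (p - 1) + 1) = ⊥ := by
  have : CharP (AddMonoidAlgebra R (ι → ZMod p)) p := charP_of_injective_algebraMap' R p
  rw [← Ideal.zero_eq_bot]
  refine sum_pow_card_mul_add_one_eq_zero _ _ fun l _ => ?_
  rw [Ideal.span_singleton_pow, Nat.sub_add_cancel (Fact.out : p.Prime).one_le, sub_pow_char,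
    AddMonoidAlgebra.single_pow, one_pow, one_pow, ← Pi.single_smul, nsmul_eq_mul,
    CharP.cast_eq_zero, zero_mul, Pi.single_zero, ← AddMonoidAlgebra.one_def, sub_self,
    Ideal.span_singleton_eq_bot.2 rfl, Ideal.zero_eq_bot]

end GroupAlgebra

theorem AddMonoidAlgebra.aeval_single_sub_one_sum_C_mul_X_add_one_pow {R G : Type*}
    [CommRing R] [AddCommMonoid G] (h : G) (B : Finset ℕ) (γ : ℕ → R) :
    aeval (single h 1 - 1) (∑ a ∈ B, C (γ a) * (X + 1) ^ a) = ∑ a ∈ B, single (a • h) (γ a) := by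
  simp [AddMonoidAlgebra.single_pow]

theorem coeff_zero_prod_sum_single_of_not_hasZeroComb {G R : Type*} [AddCommGroup G]
    [CommSemiring R] {A : Finset ℕ} {n : ℕ} {g : Fin n → G} (hg : ¬ hasZeroComb A g)
    (γ : ℕ → R) :
    (∏ i, ∑ a ∈ insert 0 A, AddMonoidAlgebra.single (a • g i) (γ a)).coeff 0 = γ 0 ^ n := by
  classical
  have hzero : ∀ φ ∈ Fintype.piFinset fun _ => insert 0 A, ∑ i, φ i • g i = 0 → φ = 0 := by
    intro φ hφ hsum
    by_contra hφ0
    obtain ⟨i, hi⟩ := Function.ne_iff.1 hφ0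
    refine hg ⟨univ.filter (φ · ≠ 0), ⟨i, by simpa using hi⟩, φ, fun j hj => ?_, ?_⟩
    · exact (mem_insert.1 (Fintype.mem_piFinset.1 hφ j)).resolve_left (mem_filter.1 hj).2
    · rwa [sum_filter_of_ne (p := (φ · ≠ 0)) fun j _ hj h => hj (by rw [h, zero_smul])]
  rw [prod_univ_sum]
  simp only [AddMonoidAlgebra.prod_single, AddMonoidAlgebra.coeff_sum,
    AddMonoidAlgebra.coeff_single, Finsupp.finsetSum_apply, Finsupp.single_apply]
  rw [sum_eq_single_of_mem 0 (Fintype.mem_piFinset.2 fun _ => mem_insert_self 0 A)]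
  · simp
  · intro φ hφ hφ0
    exact if_neg fun h => hφ0 (hzero φ hφ h)

theorem exists_sum_mul_descPochhammer_eval_eq {F : Type*} [Field F] {m : ℕ} {v : Fin m → F}
    (hv : Function.Injective v) (b : Fin m → F) :
    ∃ x : Fin m → F, ∀ j : Fin m, ∑ i, x i * (descPochhammer F j).eval (v i) = b j := by
  set M : Matrix (Fin m) (Fin m) F := .of fun i j => (descPochhammer F j).eval (v i)
  have hM : IsUnit M := by
    rw [Matrix.isUnit_iff_isUnit_det, ← Matrix.det_eval_matrixOfPolynomials_eq_det_vandermonde v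
      _ (fun j => descPochhammer_natDegree F j) (fun j => monic_descPochhammer F j)]
    exact (Matrix.det_vandermonde_ne_zero_iff.2 hv).isUnit
  obtain ⟨x, hx⟩ := Matrix.vecMul_surjective_iff_isUnit.2 hM b
  exact ⟨x, congrFun hx⟩

theorem exists_X_pow_card_dvd_sum_C_mul_X_add_one_pow {p : ℕ} [Fact p.Prime] {A : Finset ℕ}
    (hA : A ⊆ Icc 1 (p - 1)) :
    ∃ γ : ℕ → ZMod p, γ 0 = 1 ∧ X ^ #A ∣ ∑ a ∈ insert 0 A, C (γ a) * (X + 1) ^ a := by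
  have hlt : ∀ a ∈ A, 0 < a ∧ a < p := fun a ha => by
    have := mem_Icc.1 (hA ha)
    have := (Fact.out : p.Prime).one_lt
    omega
  have h0 : 0 ∉ A := fun h => (hlt 0 h).1.false
  set e : Fin #A ≃ A := A.equivFin.symm
  have he : Function.Injective fun i => ((e i : ℕ) : ZMod p) := fun i j hij =>
    e.injective <| Subtype.ext <| by
      simpa [ZMod.natCast_eq_natCast_iff', Nat.mod_eq_of_lt (hlt _ (e _).2).2] using hij
  -- After multiplying by `j!`, the coefficient of `X^j` is `∑ γ a * descPochhammer j (a)`; the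
  -- right-hand side `-descPochhammer j (0)` is what the term `a = 0`, with `γ 0 = 1`, cancels.
  obtain ⟨x, hx⟩ := exists_sum_mul_descPochhammer_eval_eq he fun j => -(descPochhammer _ j).eval 0
  set γ : ℕ → ZMod p := fun a => if h : a ∈ A then x (e.symm ⟨a, h⟩) else 1
  have hγ0 : γ 0 = 1 := dif_neg h0
  refine ⟨γ, hγ0, X_pow_dvd_iff.2 fun j hj => ?_⟩
  have hfac : (j.factorial : ZMod p) ≠ 0 := by
    rw [Ne, ZMod.natCast_eq_zero_iff, (Fact.out : p.Prime).dvd_factorial]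
    have := (card_le_card hA).trans_eq (Nat.card_Icc 1 (p - 1))
    omega
  have hsumA : ∑ a ∈ A, γ a * (descPochhammer (ZMod p) j).eval (a : ZMod p) =
      -(descPochhammer _ j).eval 0 := by
    rw [← sum_coe_sort, ← hx ⟨j, hj⟩]
    exact Fintype.sum_equiv e.symm _ _ fun a => by simp [γ]
  refine (mul_eq_zero.1 ?_).resolve_left hfac
  simp only [finsetSum_coeff, coeff_C_mul, coeff_X_add_one_pow, mul_sum]
  calc ∑ a ∈ insert 0 A, (j.factorial : ZMod p) * (γ a * (a.choose j : ZMod p))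
      = ∑ a ∈ insert 0 A, γ a * (descPochhammer (ZMod p) j).eval (a : ZMod p) := by
        refine sum_congr rfl fun a _ => ?_
        rw [descPochhammer_eval_eq_descFactorial, Nat.descFactorial_eq_factorial_mul_choose]
        push_cast
        ring
    _ = 0 := by
        rw [sum_insert h0, hsumA, hγ0, Nat.cast_zero, one_mul, add_neg_cancel]

theorem hasZeroComb_of_card_mul_lt {p : ℕ} [Fact p.Prime] {ι : Type*} [Fintype ι]
    [DecidableEq ι] {A : Finset ℕ} (hA : A ⊆ Icc 1 (p - 1)) {n : ℕ}
    (hn : Fintype.card ι * (p - 1) < #A * n) (g : Fin n → (ι → ZMod p)) : hasZeroComb A g := by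
  obtain ⟨γ, hγ0, hdvd⟩ := exists_X_pow_card_dvd_sum_C_mul_X_add_one_pow hA
  by_contra hg
  have hmem : ∀ i, ∑ a ∈ insert 0 A, AddMonoidAlgebra.single (a • g i) (γ a) ∈
      augIdeal (ZMod p) ι p ^ #A := fun i => by
    rw [← AddMonoidAlgebra.aeval_single_sub_one_sum_C_mul_X_add_one_pow]
    exact aeval_mem_pow_of_X_pow_dvd (single_sub_one_mem_augIdeal (g i)) hdvd
  have hprod : ∏ i, ∑ a ∈ insert 0 A, AddMonoidAlgebra.single (a • g i) (γ a) = 0 := by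
    have := Ideal.prod_mem_prod fun i (_ : i ∈ univ) => hmem i
    rw [prod_const, card_univ, Fintype.card_fin, ← pow_mul] at this
    rw [← Ideal.mem_bot, ← augIdeal_pow_eq_bot]
    exact Ideal.pow_le_pow_right hn this
  have := coeff_zero_prod_sum_single_of_not_hasZeroComb hg γ
  rw [hprod, hγ0, one_pow] at this
  exact zero_ne_one this

theorem sum_natCast_ne_zero_of_card_le_two {p : ℕ} {A : Finset ℕ} (hA : A ⊆ Icc 1 (p - 1))
    (hsym : ∀ x ∈ A, p - x ∉ A) {κ : Type*} {F : Finset κ} (hF : F.Nonempty) (hF2 : #F ≤ 2)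
    {a : κ → ℕ} (ha : ∀ i ∈ F, a i ∈ A) : ∑ i ∈ F, (a i : ZMod p) ≠ 0 := by
  classical
  have hbd : ∀ i ∈ F, 1 ≤ a i ∧ a i ≤ p - 1 := fun i hi => mem_Icc.1 (hA (ha i hi))
  rw [← Nat.cast_sum, Ne, ZMod.natCast_eq_zero_iff]
  intro hdvd
  have hF1 := hF.card_pos
  interval_cases hc : #F
  · obtain ⟨i, rfl⟩ := card_eq_one.1 hc
    have := hbd i (mem_singleton_self i)
    rw [sum_singleton] at hdvd
    exact absurd (Nat.le_of_dvd (by omega) hdvd) (by omega)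
  · obtain ⟨i, j, hij, rfl⟩ := card_eq_two.1 hc
    have hi := hbd i (by simp)
    have hj := hbd j (by simp)
    rw [sum_pair hij] at hdvd
    have hp : a i + a j = p := Nat.eq_of_dvd_of_lt_two_mul (by omega) hdvd (by omega)
    exact hsym (a i) (ha i (by simp)) (by rw [show p - a i = a j by omega]; exact ha j (by simp))

theorem exists_not_hasZeroComb_of_le_two_mul {p d t : ℕ} {A : Finset ℕ}
    (hA : A ⊆ Icc 1 (p - 1)) (hsym : ∀ x ∈ A, p - x ∉ A) (ht : t ≤ 2 * d) :
    ∃ g : Fin t → (Fin d → ZMod p), ¬ hasZeroComb A g := by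
  classical
  set f : Fin t → Fin d := fun i => ⟨i / 2, by omega⟩
  refine ⟨fun i => Pi.single (f i) 1, ?_⟩
  rintro ⟨s, ⟨i₀, hi₀⟩, a, ha, hsum⟩
  have hfiber : #(s.filter (f · = f i₀)) ≤ 2 := by
    calc #(s.filter (f · = f i₀)) ≤ #(range 2) :=
          card_le_card_of_injOn (fun i => (i : ℕ) % 2)
            (fun i _ => mem_range.2 (Nat.mod_lt _ two_pos)) ?_
      _ = 2 := card_range 2
    intro i hi j hj hij
    simp only [coe_filter, Set.mem_ofPred_eq, f, Fin.ext_iff] at hi hj hij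
    ext
    omega
  refine sum_natCast_ne_zero_of_card_le_two hA hsym ⟨i₀, by simpa using hi₀⟩ hfiber
    (fun i hi => ha i (mem_filter.1 hi).1) ?_
  simpa [Finset.sum_apply, Pi.single_apply, sum_filter, eq_comm] using congrFun hsum (f i₀)

theorem stmt8_general {p d : ℕ} (hp : p.Prime) (hodd : Odd p)
    (A5 : Finset ℕ) (hsub : A5 ⊆ Finset.Icc 1 (p - 1))
    (hcard : A5.card = (p - 1) / 2)
    (hsym : ∀ x ∈ A5, p - x ∉ A5) :
    IsLeast {t : ℕ | ∀ g : Fin t → (Fin d → ZMod p), hasZeroComb A5 g}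
      (2 * d + 1) := by
  have := Fact.mk hp
  refine ⟨fun g => hasZeroComb_of_card_mul_lt hsub ?_ g, fun t ht => ?_⟩
  · obtain ⟨k, rfl⟩ := hodd
    have hk : 1 ≤ k := by
      by_contra! h
      simp [show k = 0 by omega, Nat.not_prime_one] at hp
    rw [Fintype.card_fin, hcard, add_tsub_cancel_right, Nat.mul_div_cancel_left k two_pos]
    nlinarith
  · by_contra! hlt
    obtain ⟨g, hg⟩ := exists_not_hasZeroComb_of_le_two_mul (d := d) (t := t) hsub hsym (by omega)
    exact hg (ht g)

theorem stmt8 {p d : ℕ} (hp : p.Prime) (hodd : Odd p) (hd : 1 ≤ d)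
    (A5 : Finset ℕ) (hsub : A5 ⊆ Finset.Icc 1 (p - 1))
    (hcard : A5.card = (p - 1) / 2)
    (hsym : ∀ x ∈ A5, p - x ∉ A5) :
    IsLeast {t : ℕ | ∀ g : Fin t → (Fin d → ZMod p), hasZeroComb A5 g}
      (2 * d + 1) :=
  stmt8_general hp hodd A5 hsub hcard hsym
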